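/- For every k ∈ ℕ with k ≥ 2 there exist a constant c > 0 and D_0 = D_0(k) such that for every integer D ≥ D_0 there exists n_0 = n_0(D) such that for all even n ≥ n_0 the following holds. Let M be a k-configuration of order n, let e = ab be an available edge, set m := n/2 − D, fix a colour i and an integer ℓ ≥ 1. Let B_ℓ^i be the set of red matchings of size m covering neither a nor b in which e is i-blocked and the i-blocking path contains exactly ℓ red edges, and let N_{ℓ−1}^i be the set of red matchings of size m covering neither a nor b in which e is not i-blocked and the maximal alternating i-red paths starting at a and at b together contain exactly ℓ−1 red edges. Then ℓ·c·D²·|B_ℓ^i| ≤ n·|N_{ℓ−1}^i|. -/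

import Mathlib

open scoped Classical

namespace Kotzig

variable {V : Type}

/-- The set of vertices covered by a set of edges. -/
def covered (M : Set (Sym2 V)) : Set V := {v | ∃ e ∈ M, v ∈ e}

/-- A set of unordered pairs of vertices is a matching: its elements are non-loops and
pairwise vertex-disjoint. -/
def IsMatchingE (M : Set (Sym2 V)) : Prop :=
  (∀ e ∈ M, ¬ e.IsDiag) ∧
    ∀ e ∈ M, ∀ f ∈ M, e ≠ f → ∀ v : V, v ∈ e → v ∉ f

/-- A perfect matching on the vertex set `V`. -/
def IsPerfectMatchingE (M : Set (Sym2 V)) : Prop :=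
  IsMatchingE M ∧ ∀ v : V, v ∈ covered M

/-- `M ∪ M'` forms a Hamilton cycle. -/
def UnionHam [Fintype V] (M M' : Set (Sym2 V)) : Prop :=
  (SimpleGraph.fromEdgeSet (M ∪ M')).IsHamiltonian

/-- A `k`-configuration: `k` perfect matchings (colours) on a common vertex set. -/
def IsConfig {k : ℕ} (Mc : Fin k → Set (Sym2 V)) : Prop :=
  ∀ i, IsPerfectMatchingE (Mc i)

/-- A pair of vertices forms an available edge if it is an edge of none of the matchings. -/
def Available {k : ℕ} (Mc : Fin k → Set (Sym2 V)) (e : Sym2 V) : Prop :=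
  ¬ e.IsDiag ∧ ∀ i, e ∉ Mc i

/-- A (partial) red matching of a configuration: a matching of available edges whose union
with each colour contains no cycle. -/
def IsRedMatching {k : ℕ} (Mc : Fin k → Set (Sym2 V)) (M : Set (Sym2 V)) : Prop :=
  IsMatchingE M ∧ (∀ e ∈ M, Available Mc e) ∧
    ∀ i, (SimpleGraph.fromEdgeSet (M ∪ Mc i)).IsAcyclic

/-- A red perfect matching: a perfect matching forming a Hamilton cycle with each colour. -/
def IsRedPerfectMatching [Fintype V] {k : ℕ} (Mc : Fin k → Set (Sym2 V))
    (M : Set (Sym2 V)) : Prop :=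
  IsPerfectMatchingE M ∧ ∀ i, UnionHam M (Mc i)

/-- The colour-`i` matching of the reduced configuration of the red matching `M`, where `Mi`
is the colour-`i` matching: two distinct vertices uncovered by `M` are joined precisely when
the maximal path alternating between `Mi` and `M` starting at one ends at the other,
equivalently (as `M ∪ Mi` is an acyclic union of a matching and a perfect matching)
when they lie in the same connected component of `Mi ∪ M`. -/
def reducedColour (Mi M : Set (Sym2 V)) : Set (Sym2 V) :=
  {e | ∃ u v : V, e = s(u, v) ∧ u ≠ v ∧ u ∉ covered M ∧ v ∉ covered M ∧
    (SimpleGraph.fromEdgeSet (Mi ∪ M)).Reachable u v}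

/-- The total overlap of a configuration: `Σ_{i ≠ j} |M_i ∩ M_j|` over ordered pairs. -/
noncomputable def totalOverlap {k : ℕ} (Mc : Fin k → Set (Sym2 V)) : ℕ :=
  ∑ i : Fin k, ∑ j : Fin k, if i ≠ j then (Mc i ∩ Mc j).ncard else 0

/-- The total overlap of the reduced configuration of the red matching `M`. -/
noncomputable def reducedOverlap {k : ℕ} (Mc : Fin k → Set (Sym2 V)) (M : Set (Sym2 V)) : ℕ :=
  totalOverlap (fun i => reducedColour (Mc i) M)


/-- The number of red edges (edges of `M`) lying on the maximal alternating path of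
`Mi`-edges and `M`-edges starting at the vertex `a`, i.e. the number of edges of `M` in the
connected component of `a` in `Mi ∪ M`. -/
noncomputable def pathRedCount {V : Type} (Mi M : Set (Sym2 V)) (a : V) : ℕ :=
  {f ∈ M | ∃ v ∈ f, (SimpleGraph.fromEdgeSet (Mi ∪ M)).Reachable a v}.ncard

set_option linter.unusedSectionVars false

open SimpleGraph

section Graph

variable {S : Set (Sym2 V)} {u v w z x y : V}

lemma fromEdgeSet_sdiff_singleton (T : Set (Sym2 V)) (e : Sym2 V) :
    fromEdgeSet T \ fromEdgeSet {e} = fromEdgeSet (T \ {e}) := by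
  ext a b
  simp only [sdiff_adj, fromEdgeSet_adj, Set.mem_diff, Set.mem_singleton_iff]
  tauto

lemma reach_add (h : (fromEdgeSet (insert s(u,v) S)).Reachable w z) :
    (fromEdgeSet S).Reachable w z ∨
      ((fromEdgeSet S).Reachable w u ∧ (fromEdgeSet S).Reachable v z) ∨
      ((fromEdgeSet S).Reachable w v ∧ (fromEdgeSet S).Reachable u z) := by
  obtain ⟨p⟩ := h
  induction p with
  | nil => exact Or.inl (Reachable.refl _)
  | @cons a b c hadj p ih =>
    rw [fromEdgeSet_adj] at hadj
    obtain ⟨hmem, hne⟩ := hadj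
    rcases Set.mem_insert_iff.mp hmem with he | hS
    · rw [Sym2.eq_iff] at he
      rcases he with ⟨rfl, rfl⟩ | ⟨rfl, rfl⟩
      · rcases ih with h1 | ⟨h1, h2⟩ | ⟨h1, h2⟩
        · exact Or.inr (Or.inl ⟨(Reachable.refl _), h1⟩)
        · exact Or.inl (h1.symm.trans h2)
        · exact Or.inl h2
      · rcases ih with h1 | ⟨h1, h2⟩ | ⟨h1, h2⟩
        · exact Or.inr (Or.inr ⟨(Reachable.refl _), h1⟩)
        · exact Or.inl h2
        · exact Or.inl (h1.symm.trans h2)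
    · have hadj' : (fromEdgeSet S).Reachable a b := ((fromEdgeSet_adj _).mpr ⟨hS, hne⟩).reachable
      rcases ih with h1 | ⟨h1, h2⟩ | ⟨h1, h2⟩
      · exact Or.inl (hadj'.trans h1)
      · exact Or.inr (Or.inl ⟨hadj'.trans h1, h2⟩)
      · exact Or.inr (Or.inr ⟨hadj'.trans h1, h2⟩)

lemma reach_del (x y : V) (h : (fromEdgeSet S).Reachable w z) :
    (fromEdgeSet (S \ {s(x,y)})).Reachable w z ∨
      ((fromEdgeSet (S \ {s(x,y)})).Reachable w x ∧ (fromEdgeSet (S \ {s(x,y)})).Reachable y z) ∨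
      ((fromEdgeSet (S \ {s(x,y)})).Reachable w y ∧ (fromEdgeSet (S \ {s(x,y)})).Reachable x z) := by
  refine reach_add (h.mono (fromEdgeSet_mono ?_))
  intro e he
  by_cases h' : e = s(x,y)
  · exact h' ▸ Set.mem_insert _ _
  · exact Set.mem_insert_of_mem _ ⟨he, h'⟩

lemma acyclic_anti {G H : SimpleGraph V} (hle : H ≤ G) (hG : G.IsAcyclic) : H.IsAcyclic := by
  intro v c hc
  exact hG (c.mapLe hle) (hc.mapLe hle)

lemma acyclic_add (hac : (fromEdgeSet S).IsAcyclic) (hne : u ≠ v)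
    (hnr : ¬ (fromEdgeSet S).Reachable u v) :
    (fromEdgeSet (insert s(u,v) S)).IsAcyclic := by
  rw [isAcyclic_iff_forall_edge_isBridge]
  intro e he
  induction e with
  | _ a b =>
    rw [mem_edgeSet, fromEdgeSet_adj] at he
    obtain ⟨hmem, hab⟩ := he
    rw [isBridge_iff]
    show ¬ (fromEdgeSet (insert s(u,v) S) \ fromEdgeSet {s(a,b)}).Reachable a b
    rw [fromEdgeSet_sdiff_singleton]
    intro hr
    by_cases hcase : s(a, b) = s(u, v)
    · rw [hcase] at hr
      have hr' : (fromEdgeSet S).Reachable a b :=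
        hr.mono (fromEdgeSet_mono (fun e' h' => ((Set.mem_insert_iff.mp h'.1).resolve_left h'.2)))
      rcases Sym2.eq_iff.mp hcase with ⟨rfl, rfl⟩ | ⟨rfl, rfl⟩
      · exact hnr hr'
      · exact hnr hr'.symm
    · have hset : insert s(u,v) S \ {s(a,b)} = insert s(u,v) (S \ {s(a,b)}) := by
        rw [Set.insert_diff_of_notMem]
        simp only [Set.mem_singleton_iff]
        exact fun h => hcase h.symm
      rw [hset] at hr
      have hSab : s(a, b) ∈ S := hmem.resolve_left (fun h => hcase h)
      have hbridge := (isAcyclic_iff_forall_edge_isBridge.mp hac)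
        (by rw [mem_edgeSet]; exact (fromEdgeSet_adj _).mpr ⟨hSab, hab⟩ : s(a,b) ∈ (fromEdgeSet S).edgeSet)
      rw [isBridge_iff, deleteEdges_fromEdgeSet] at hbridge
      have hmono : fromEdgeSet (S \ {s(a,b)}) ≤ fromEdgeSet S := fromEdgeSet_mono Set.diff_subset
      have hadjS : (fromEdgeSet S).Reachable a b := ((fromEdgeSet_adj _).mpr ⟨hSab, hab⟩).reachable
      rcases reach_add hr with h1 | ⟨h1, h2⟩ | ⟨h1, h2⟩
      · exact hbridge h1
      · exact hnr ((h1.mono hmono).symm.trans (hadjS.trans (h2.mono hmono).symm))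
      · exact hnr (((h2.mono hmono).trans hadjS.symm).trans (h1.mono hmono))

end Graph

section Matching
variable {M Mi T : Set (Sym2 V)}

lemma IsMatchingE.mono (h : IsMatchingE M) (hT : T ⊆ M) : IsMatchingE T :=
  ⟨fun e he => h.1 e (hT he), fun e he f hf => h.2 e (hT he) f (hT hf)⟩

lemma matching_partner_unique (hM : IsMatchingE M) {u v w : V}
    (h1 : s(u,v) ∈ M) (h2 : s(u,w) ∈ M) : v = w := by
  by_cases h : s(u,v) = s(u,w)
  · rcases Sym2.eq_iff.mp h with ⟨-, h⟩ | ⟨h1', h2'⟩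
    · exact h
    · rw [h2', h1']
  · exact absurd (Sym2.mem_mk_left u w) (hM.2 _ h1 _ h2 h u (Sym2.mem_mk_left u v))

lemma pm_partner (hMi : IsPerfectMatchingE Mi) (v : V) : ∃ u, u ≠ v ∧ s(v,u) ∈ Mi := by
  obtain ⟨e, heMi, hve⟩ := hMi.2 v
  refine ⟨Sym2.Mem.other hve, fun h => ?_, by rw [Sym2.other_spec hve]; exact heMi⟩
  apply hMi.1.1 e heMi
  rw [← Sym2.other_spec hve, h]
  exact Sym2.mk_isDiag_iff.mpr rfl

lemma covered_mono (h : T ⊆ M) : covered T ⊆ covered M :=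
  fun _ ⟨e, he, hv⟩ => ⟨e, h he, hv⟩

lemma mem_covered_of_mem {e : Sym2 V} {v : V} (he : e ∈ M) (hv : v ∈ e) : v ∈ covered M :=
  ⟨e, he, hv⟩

end Matching

section TwoLeaf
variable [Fintype V] {T Mi : Set (Sym2 V)}

lemma walk_induce {G : SimpleGraph V} {s : Set V}
    (hcl : ∀ ⦃x y : V⦄, x ∈ s → G.Adj x y → y ∈ s) {x y : V} (p : G.Walk x y) :
    ∀ (hx : x ∈ s) (hy : y ∈ s), (G.induce s).Reachable ⟨x,hx⟩ ⟨y,hy⟩ := by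
  induction p with
  | nil => intro hx hy; exact Reachable.refl _
  | @cons a b c hadj q ih =>
    intro hx hy
    have hb : b ∈ s := hcl hx hadj
    have hadj' : (G.induce s).Adj ⟨a,hx⟩ ⟨b,hb⟩ := hadj
    exact hadj'.reachable.trans (ih hb hy)

lemma degree_eq_ncard (G : SimpleGraph V) (v : V) [Fintype (G.neighborSet v)] :
    G.degree v = (G.neighborSet v).ncard := by
  rw [← card_neighborSet_eq_degree, ← Nat.card_eq_fintype_card, Nat.card_coe_set_eq]

lemma twoleaf (hT : IsMatchingE T) (hMi : IsPerfectMatchingE Mi)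
    (hdisj : ∀ e ∈ T, e ∉ Mi)
    (hac : (fromEdgeSet (T ∪ Mi)).IsAcyclic) (w : V) :
    {v | (fromEdgeSet (T ∪ Mi)).Reachable w v ∧ v ∉ covered T}.ncard = 2 := by
  set G := fromEdgeSet (T ∪ Mi) with hGdef
  have hdeg : ∀ v : V, G.degree v = if v ∈ covered T then 2 else 1 := by
    intro v
    obtain ⟨p, hpv, hpMi⟩ := pm_partner hMi v
    by_cases hcov : v ∈ covered T
    · obtain ⟨e, heT, hve⟩ := hcov
      obtain ⟨q, rfl⟩ : ∃ q, e = s(v,q) := ⟨Sym2.Mem.other hve, (Sym2.other_spec hve).symm⟩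
      have hqv : q ≠ v := by
        intro h
        exact hT.1 _ heT (Sym2.mk_isDiag_iff.mpr h.symm)
      have hpq : p ≠ q := by
        intro h
        exact hdisj _ heT (by rw [← h] at *; exact (Sym2.eq_swap ▸ hpMi))
      have hnb : G.neighborSet v = {p, q} := by
        ext u
        simp only [mem_neighborSet, hGdef, fromEdgeSet_adj, Set.mem_union,
          Set.mem_insert_iff, Set.mem_singleton_iff]
        constructor
        · rintro ⟨hmem | hmem, hne⟩
          · exact Or.inr (matching_partner_unique hT hmem heT)
          · exact Or.inl (matching_partner_unique hMi.1 hmem hpMi)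
        · rintro (rfl | rfl)
          · exact ⟨Or.inr hpMi, fun h => hpv h.symm⟩
          · exact ⟨Or.inl heT, fun h => hqv h.symm⟩
      rw [if_pos (mem_covered_of_mem heT hve)]
      rw [degree_eq_ncard, hnb, Set.ncard_pair hpq]
    · have hnb : G.neighborSet v = {p} := by
        ext u
        simp only [mem_neighborSet, hGdef, fromEdgeSet_adj, Set.mem_union, Set.mem_singleton_iff]
        constructor
        · rintro ⟨hmem | hmem, hne⟩
          · exact absurd (mem_covered_of_mem hmem (Sym2.mem_mk_left v u)) hcov
          · exact matching_partner_unique hMi.1 hmem hpMi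
        · rintro rfl
          exact ⟨Or.inr hpMi, fun h => hpv h.symm⟩
      rw [if_neg hcov, degree_eq_ncard, hnb, Set.ncard_singleton]
  set s : Set V := {v | G.Reachable w v} with hsdef
  have hws : w ∈ s := Reachable.refl _
  have hcl : ∀ ⦃x y : V⦄, x ∈ s → G.Adj x y → y ∈ s := fun x y hx hxy => hx.trans hxy.reachable
  have hconn : (G.induce s).Connected := by
    rw [connected_iff]
    refine ⟨fun x y => ?_, ⟨⟨w, hws⟩⟩⟩
    obtain ⟨p⟩ := (x.2 : G.Reachable w x.1).symm.trans (y.2 : G.Reachable w y.1)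
    exact walk_induce hcl p x.2 y.2
  have hacind : (G.induce s).IsAcyclic := by
    intro v c hc
    exact hac (c.map (Embedding.induce (G := G) s).toHom)
      (hc.map (Embedding.induce (G := G) s).injective)
  have htree : (G.induce s).IsTree := ⟨hconn, hacind⟩
  have hcount := htree.card_edgeFinset
  have hhs := sum_degrees_eq_twice_card_edges (G.induce s)
  have hdegind : ∀ v : ↥s, (G.induce s).degree v = G.degree ↑v := by
    intro v
    rw [degree_eq_ncard, degree_eq_ncard]
    apply Set.ncard_congr (fun (u : ↥s) (_ : u ∈ (G.induce s).neighborSet v) => (u : V))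
    · intro u hu
      exact hu
    · intro u1 u2 _ _ h
      exact Subtype.ext h
    · intro u hu
      exact ⟨⟨u, hcl v.2 hu⟩, hu, rfl⟩
  have hsum2 : ∑ v : ↥s, (G.induce s).degree v +
      (Finset.univ.filter (fun v : ↥s => (v : V) ∉ covered T)).card = 2 * Fintype.card ↥s := by
    rw [Finset.card_filter, ← Finset.sum_add_distrib]
    have : ∀ v : ↥s, (G.induce s).degree v + (if (v : V) ∉ covered T then 1 else 0) = 2 := by
      intro v
      rw [hdegind, hdeg]
      by_cases h : (v : V) ∈ covered T <;> simp [h]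
    rw [Finset.sum_congr rfl (fun v _ => this v), Finset.sum_const, Finset.card_univ,
      smul_eq_mul, mul_comm]
  have hpos : 1 ≤ Fintype.card ↥s := Fintype.card_pos_iff.mpr ⟨⟨w, hws⟩⟩
  have hfil : (Finset.univ.filter (fun v : ↥s => (v : V) ∉ covered T)).card = 2 := by omega
  have hequiv : {v | G.Reachable w v ∧ v ∉ covered T} = (fun v : ↥s => (v : V)) ''
      {v : ↥s | (v : V) ∉ covered T} := by
    ext v
    constructor
    · rintro ⟨h1, h2⟩
      exact ⟨⟨v, h1⟩, h2, rfl⟩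
    · rintro ⟨⟨u, hu⟩, h2, rfl⟩
      exact ⟨hu, h2⟩
  rw [hequiv, Set.ncard_image_of_injective _ Subtype.val_injective, ← hfil,
    ← Set.ncard_coe_finset]
  congr 1
  ext v
  simp


end TwoLeaf

section Parity
variable [Fintype V] {M Mi T : Set (Sym2 V)} {a b x y v : V}

lemma even_ncard_of_involution (f : V → V) {s : Set V}
    (hf : ∀ v ∈ s, f v ∈ s ∧ f v ≠ v ∧ f (f v) = v) : Even s.ncard := by
  have key : ∀ n : ℕ, ∀ s : Set V, s.ncard = n →
      (∀ v ∈ s, f v ∈ s ∧ f v ≠ v ∧ f (f v) = v) → Even n := by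
    intro n
    induction n using Nat.strong_induction_on with
    | _ n ih =>
      intro s hs hfs
      rcases Set.eq_empty_or_nonempty s with rfl | ⟨v, hv⟩
      · simp only [Set.ncard_empty] at hs; exact hs ▸ Even.zero
      · obtain ⟨hfv, hfvne, hffv⟩ := hfs v hv
        set t := s \ {v, f v} with htdef
        have hsub : ({v, f v} : Set V) ⊆ s := by
          rintro u (rfl | rfl) <;> assumption
        have hn2 : 2 ≤ n := by
          rw [← hs, ← Set.ncard_pair (Ne.symm hfvne)]
          exact Set.ncard_le_ncard hsub (Set.toFinite s)
        have htcard : t.ncard = n - 2 := by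
          rw [htdef, Set.ncard_diff hsub (Set.toFinite _), hs, Set.ncard_pair (Ne.symm hfvne)]
        have hft : ∀ u ∈ t, f u ∈ t ∧ f u ≠ u ∧ f (f u) = u := by
          rintro u ⟨hus, hunotin⟩
          obtain ⟨h1, h2, h3⟩ := hfs u hus
          refine ⟨⟨h1, ?_⟩, h2, h3⟩
          rintro (h | h)
          · exact hunotin (by rw [← h3, h]; exact Or.inr rfl)
          · exact hunotin (Or.inl (by
              have : f (f u) = f (f v) := by rw [h]
              rw [h3, hffv] at this; exact this))
        have := ih (n - 2) (by omega) t htcard hft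
        rw [Nat.even_iff] at this ⊢
        omega
  exact key s.ncard s rfl hf

noncomputable def part (T : Set (Sym2 V)) (v : V) : V :=
  if h : ∃ u, u ≠ v ∧ s(v,u) ∈ T then h.choose else v

lemma covered_iff_exists (hT : IsMatchingE T) :
    v ∈ covered T ↔ ∃ u, u ≠ v ∧ s(v,u) ∈ T := by
  constructor
  · rintro ⟨e, heT, hve⟩
    refine ⟨Sym2.Mem.other hve, fun h => ?_, by rw [Sym2.other_spec hve]; exact heT⟩
    apply hT.1 e heT
    rw [← Sym2.other_spec hve, h]
    exact Sym2.mk_isDiag_iff.mpr rfl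
  · rintro ⟨u, _, huT⟩
    exact ⟨_, huT, Sym2.mem_mk_left _ _⟩

lemma part_spec (hT : IsMatchingE T) (h : v ∈ covered T) :
    part T v ≠ v ∧ s(v, part T v) ∈ T := by
  rw [covered_iff_exists hT] at h
  rw [part, dif_pos h]
  exact h.choose_spec

lemma part_invol (hT : IsMatchingE T) (h : v ∈ covered T) : part T (part T v) = v := by
  obtain ⟨hne, hmem⟩ := part_spec hT h
  have h2 : part T v ∈ covered T := ⟨_, hmem, Sym2.mem_mk_right _ _⟩
  obtain ⟨hne2, hmem2⟩ := part_spec hT h2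
  have : s(part T v, v) ∈ T := by rw [Sym2.eq_swap]; exact hmem
  exact matching_partner_unique hT hmem2 this

lemma twoleaf_pair (hM : IsMatchingE M) (hMi : IsPerfectMatchingE Mi)
    (hdisj : ∀ e ∈ M, e ∉ Mi) (hac : (fromEdgeSet (M ∪ Mi)).IsAcyclic)
    (ha : a ∉ covered M) (hb : b ∉ covered M) (hab : a ≠ b)
    (hr : (fromEdgeSet (M ∪ Mi)).Reachable a b) :
    {v | (fromEdgeSet (M ∪ Mi)).Reachable a v ∧ v ∉ covered M} = {a, b} := by
  refine (Set.eq_of_subset_of_ncard_le ?_ ?_ (Set.toFinite _)).symm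
  · rintro v (rfl | rfl)
    · exact ⟨Reachable.refl _, ha⟩
    · exact ⟨hr, hb⟩
  · rw [twoleaf hM hMi hdisj hac a, Set.ncard_pair hab]

lemma covered_diff_singleton (hM : IsMatchingE M) (hf : s(x,y) ∈ M) :
    covered (M \ {s(x,y)}) = covered M \ {x, y} := by
  ext v
  constructor
  · rintro ⟨e, ⟨heM, hef⟩, hve⟩
    refine ⟨⟨e, heM, hve⟩, ?_⟩
    rintro (rfl | rfl)
    · exact hM.2 e heM _ hf (fun h => hef h) v hve (Sym2.mem_mk_left _ _)
    · exact hM.2 e heM _ hf (fun h => hef h) v hve (Sym2.mem_mk_right _ _)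
  · rintro ⟨⟨e, heM, hve⟩, hnotin⟩
    refine ⟨e, ⟨heM, fun h => ?_⟩, hve⟩
    rw [Set.mem_singleton_iff] at h
    subst h
    rcases Sym2.mem_iff.mp hve with rfl | rfl
    · exact hnotin (Or.inl rfl)
    · exact hnotin (Or.inr rfl)

lemma union_diff_edge {M Mi : Set (Sym2 V)} {e : Sym2 V} (he : e ∉ Mi) :
    (M ∪ Mi) \ {e} = (M \ {e}) ∪ Mi := by
  rw [Set.union_diff_distrib, Set.diff_singleton_eq_self he]

lemma split_one (hM : IsMatchingE M) (hMi : IsPerfectMatchingE Mi)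
    (hdisj : ∀ e ∈ M, e ∉ Mi) (hac : (fromEdgeSet (M ∪ Mi)).IsAcyclic)
    (ha : a ∉ covered M) (hb : b ∉ covered M) (hab : a ≠ b)
    (hreach : (fromEdgeSet (M ∪ Mi)).Reachable a b)
    (hf : s(x,y) ∈ M) (hax : (fromEdgeSet (M ∪ Mi)).Reachable a x) :
    ((fromEdgeSet ((M \ {s(x,y)}) ∪ Mi)).Reachable x a ∧
      ¬(fromEdgeSet ((M \ {s(x,y)}) ∪ Mi)).Reachable x b) ∨
    ((fromEdgeSet ((M \ {s(x,y)}) ∪ Mi)).Reachable x b ∧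
      ¬(fromEdgeSet ((M \ {s(x,y)}) ∪ Mi)).Reachable x a) := by
  set G := fromEdgeSet (M ∪ Mi) with hGdef
  set Gm := fromEdgeSet ((M \ {s(x,y)}) ∪ Mi) with hGmdef
  have hxyne : x ≠ y := fun h => hM.1 _ hf (Sym2.mk_isDiag_iff.mpr h)
  have hGm_eq : G \ fromEdgeSet {s(x,y)} = Gm := by
    rw [hGdef, hGmdef, fromEdgeSet_sdiff_singleton, union_diff_edge (hdisj _ hf)]
  have hnxy : ¬Gm.Reachable x y := by
    have hbr := isAcyclic_iff_forall_adj_isBridge.mp hac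
      (show G.Adj x y from (fromEdgeSet_adj _).mpr ⟨Or.inl hf, hxyne⟩)
    rw [isBridge_iff] at hbr
    change ¬ (G \ fromEdgeSet {s(x,y)}).Reachable x y at hbr
    rw [hGm_eq] at hbr
    exact hbr
  have hmono : Gm ≤ G := fromEdgeSet_mono (Set.union_subset_union_left Mi Set.diff_subset)
  have hMm : IsMatchingE (M \ {s(x,y)}) := hM.mono Set.diff_subset
  set W : Set V := {z | Gm.Reachable x z} with hWdef
  have hWsub : ∀ z ∈ W, G.Reachable a z := fun z hz => hax.trans ((hz : Gm.Reachable x z).mono hmono)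
  have hevenW : Even W.ncard := by
    apply even_ncard_of_involution (part Mi)
    intro z hz
    have hzc : z ∈ covered Mi := hMi.2 z
    obtain ⟨hne, hmem⟩ := part_spec hMi.1 hzc
    have hadj : Gm.Adj z (part Mi z) := (fromEdgeSet_adj _).mpr ⟨Or.inr hmem, fun h => hne h.symm⟩
    exact ⟨(hz : Gm.Reachable x z).trans hadj.reachable, hne, part_invol hMi.1 hzc⟩
  have hevenC : Even (W ∩ covered (M \ {s(x,y)})).ncard := by
    apply even_ncard_of_involution (part (M \ {s(x,y)}))
    rintro z ⟨hzW, hzc⟩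
    obtain ⟨hne, hmem⟩ := part_spec hMm hzc
    have hadj : Gm.Adj z (part (M \ {s(x,y)}) z) :=
      (fromEdgeSet_adj _).mpr ⟨Or.inl hmem, fun h => hne h.symm⟩
    refine ⟨⟨(hzW : Gm.Reachable x z).trans hadj.reachable,
      ⟨_, hmem, Sym2.mem_mk_right _ _⟩⟩, hne, part_invol hMm hzc⟩
  have hsplit : (W ∩ covered (M \ {s(x,y)})).ncard + (W \ covered (M \ {s(x,y)})).ncard
      = W.ncard := Set.ncard_inter_add_ncard_diff_eq_ncard W _ (Set.toFinite _)
  have hevenU : Even (W \ covered (M \ {s(x,y)})).ncard := by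
    rw [Nat.even_iff] at hevenW hevenC ⊢
    omega
  have hpair := twoleaf_pair hM hMi hdisj hac ha hb hab hreach
  have hxW : x ∈ W := Reachable.refl _
  have hxunc : x ∉ covered (M \ {s(x,y)}) := by
    rw [covered_diff_singleton hM hf]
    rintro ⟨-, hx⟩
    exact hx (Or.inl rfl)
  have hUeq : W \ covered (M \ {s(x,y)}) = insert x (({a, b} : Set V) ∩ W) := by
    ext z
    constructor
    · rintro ⟨hzW, hzunc⟩
      rw [covered_diff_singleton hM hf] at hzunc
      by_cases hzM : z ∈ covered M
      · have hz2 : z ∈ ({x, y} : Set V) := by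
          by_contra hz2
          exact hzunc ⟨hzM, hz2⟩
        rcases hz2 with rfl | rfl
        · exact Set.mem_insert _ _
        · exact absurd hzW hnxy
      · have : z ∈ ({a, b} : Set V) := by
          rw [← hpair]
          exact ⟨hWsub z hzW, hzM⟩
        exact Set.mem_insert_of_mem _ ⟨this, hzW⟩
    · rintro (rfl | ⟨hz1, hz2⟩)
      · exact ⟨hxW, hxunc⟩
      · refine ⟨hz2, ?_⟩
        rw [covered_diff_singleton hM hf]
        rintro ⟨hzc, -⟩
        rcases hz1 with rfl | rfl
        · exact ha hzc
        · exact hb hzc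
  have hxab : x ∉ ({a, b} : Set V) := by
    rintro (rfl | rfl)
    · exact ha ⟨_, hf, Sym2.mem_mk_left _ _⟩
    · exact hb ⟨_, hf, Sym2.mem_mk_left _ _⟩
  have hcard1 : (({a, b} : Set V) ∩ W).ncard = 1 := by
    have : (insert x (({a, b} : Set V) ∩ W)).ncard = (({a, b} : Set V) ∩ W).ncard + 1 := by
      apply Set.ncard_insert_of_notMem
      · rintro ⟨h1, -⟩; exact hxab h1
      · exact Set.toFinite _
    rw [hUeq, this] at hevenU
    have hle : (({a, b} : Set V) ∩ W).ncard ≤ 2 := by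
      calc (({a, b} : Set V) ∩ W).ncard ≤ ({a, b} : Set V).ncard :=
            Set.ncard_le_ncard Set.inter_subset_left (Set.toFinite _)
        _ = 2 := Set.ncard_pair hab
    rw [Nat.even_iff] at hevenU
    -- intersect card is odd and ≤ 2, so = 1
    omega
  by_cases haW : a ∈ W
  · left
    refine ⟨haW, fun hbW => ?_⟩
    have : ({a, b} : Set V) ∩ W = {a, b} := by
      apply Set.inter_eq_self_of_subset_left
      rintro z (rfl | rfl) <;> assumption
    rw [this, Set.ncard_pair hab] at hcard1
    omega
  · by_cases hbW : b ∈ W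
    · exact Or.inr ⟨hbW, haW⟩
    · exfalso
      have : ({a, b} : Set V) ∩ W = ∅ := by
        ext z
        simp only [Set.mem_inter_iff, Set.mem_empty_iff_false, iff_false, not_and]
        rintro (rfl | rfl) <;> intro h <;> [exact haW h; exact hbW h]
      rw [this, Set.ncard_empty] at hcard1
      omega

end Parity

section Switch
variable [Fintype V] {k : ℕ} {Mc : Fin k → Set (Sym2 V)} {M : Set (Sym2 V)}
  {a b x y u v : V} {i : Fin k}

lemma switch_all (hconf : IsConfig Mc) (hred : IsRedMatching Mc M)
    (hab : a ≠ b) (ha : a ∉ covered M) (hb : b ∉ covered M)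
    (hblocked : (fromEdgeSet (M ∪ Mc i)).Reachable a b)
    (hf : s(x,y) ∈ M) (hax : (fromEdgeSet (M ∪ Mc i)).Reachable a x)
    (hu : u ∉ covered M) (hv : v ∉ covered M) (huv : u ≠ v)
    (hua : u ≠ a) (hub : u ≠ b) (hva : v ≠ a) (hvb : v ≠ b)
    (havail : Available Mc s(u,v))
    (hnreach : ∀ j, ¬(fromEdgeSet (M ∪ Mc j)).Reachable u v) :
    IsRedMatching Mc (insert s(u,v) (M \ {s(x,y)})) ∧
    (insert s(u,v) (M \ {s(x,y)})).ncard = M.ncard ∧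
    a ∉ covered (insert s(u,v) (M \ {s(x,y)})) ∧
    b ∉ covered (insert s(u,v) (M \ {s(x,y)})) ∧
    ¬(fromEdgeSet (insert s(u,v) (M \ {s(x,y)}) ∪ Mc i)).Reachable a b ∧
    pathRedCount (Mc i) (insert s(u,v) (M \ {s(x,y)})) a +
      pathRedCount (Mc i) (insert s(u,v) (M \ {s(x,y)})) b + 1 =
      pathRedCount (Mc i) M a := by
  have hM : IsMatchingE M := hred.1
  have hMi : IsPerfectMatchingE (Mc i) := hconf i
  have hdisj : ∀ e ∈ M, e ∉ Mc i := fun e he => (hred.2.1 e he).2 i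
  have hac : (fromEdgeSet (M ∪ Mc i)).IsAcyclic := hred.2.2 i
  set f : Sym2 V := s(x,y) with hfdef
  set M' : Set (Sym2 V) := insert s(u,v) (M \ {f}) with hM'def
  set G : SimpleGraph V := fromEdgeSet (M ∪ Mc i) with hGdef
  set Gm : SimpleGraph V := fromEdgeSet ((M \ {f}) ∪ Mc i) with hGmdef
  have hxyne : x ≠ y := fun h => hM.1 _ hf (Sym2.mk_isDiag_iff.mpr h)
  have hmono : Gm ≤ G := fromEdgeSet_mono (Set.union_subset_union_left _ Set.diff_subset)
  have hpair := twoleaf_pair hM hMi hdisj hac ha hb hab hblocked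
  have huab : ∀ z : V, z ∉ covered M → z ≠ a → z ≠ b → ¬G.Reachable a z := by
    intro z hz hza hzb hr
    have : z ∈ ({a, b} : Set V) := hpair ▸ ⟨hr, hz⟩
    rcases this with rfl | rfl
    · exact hza rfl
    · exact hzb rfl
  have hsplit := split_one hM hMi hdisj hac ha hb hab hblocked hf hax
  have hsep : ¬Gm.Reachable a b := by
    intro hr
    rcases hsplit with ⟨h1, h2⟩ | ⟨h1, h2⟩
    · exact h2 (h1.trans hr)
    · exact h2 (h1.trans hr.symm)
  -- new matching
  have hsuvM : s(u,v) ∉ M := fun h => hu ⟨_, h, Sym2.mem_mk_left _ _⟩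
  have hmatch : IsMatchingE M' := by
    constructor
    · rintro e (rfl | ⟨he, -⟩)
      · exact fun h => huv (Sym2.mk_isDiag_iff.mp h)
      · exact hM.1 e he
    · rintro e (rfl | ⟨he, hef⟩) g (rfl | ⟨hg, hgf⟩) hne z hz
      · exact absurd rfl hne
      · rcases Sym2.mem_iff.mp hz with rfl | rfl
        · exact fun h => hu ⟨g, hg, h⟩
        · exact fun h => hv ⟨g, hg, h⟩
      · intro h
        rcases Sym2.mem_iff.mp h with rfl | rfl
        · exact hu ⟨e, he, hz⟩
        · exact hv ⟨e, he, hz⟩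
      · exact hM.2 e he g hg hne z hz
  -- red matching
  have hred' : IsRedMatching Mc M' := by
    refine ⟨hmatch, ?_, ?_⟩
    · rintro e (rfl | ⟨he, -⟩)
      · exact havail
      · exact hred.2.1 e he
    · intro j
      have hun : M' ∪ Mc j = insert s(u,v) ((M \ {f}) ∪ Mc j) := by
        rw [hM'def, Set.insert_union]
      rw [hun]
      apply acyclic_add
      · exact acyclic_anti
          (fromEdgeSet_mono (Set.union_subset_union_left _ Set.diff_subset)) (hred.2.2 j)
      · exact huv
      · intro hr
        exact hnreach j (hr.mono
          (fromEdgeSet_mono (Set.union_subset_union_left _ Set.diff_subset)))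
  -- cardinality
  have hcard : M'.ncard = M.ncard := by
    rw [hM'def, Set.ncard_insert_of_notMem (fun h => hsuvM h.1) (Set.toFinite _),
      Set.ncard_diff_singleton_add_one hf (Set.toFinite _)]
  -- cover
  have hcov : ∀ z : V, z ∉ covered M → z ≠ u → z ≠ v → z ∉ covered M' := by
    rintro z hz hzu hzv ⟨e, he, hze⟩
    rcases he with rfl | ⟨he, -⟩
    · rcases Sym2.mem_iff.mp hze with rfl | rfl
      · exact hzu rfl
      · exact hzv rfl
    · exact hz ⟨e, he, hze⟩
  have ha' : a ∉ covered M' := hcov a ha (fun h => hua h.symm) (fun h => hva h.symm)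
  have hb' : b ∉ covered M' := hcov b hb (fun h => hub h.symm) (fun h => hvb h.symm)
  -- components of a and b in G' equal those in Gm
  have hG'un : M' ∪ Mc i = insert s(u,v) ((M \ {f}) ∪ Mc i) := by
    rw [hM'def, Set.insert_union]
  have hGmle : Gm ≤ fromEdgeSet (M' ∪ Mc i) := by
    rw [hG'un]
    exact fromEdgeSet_mono (Set.subset_insert _ _)
  have hkeyA : ∀ z : V, (fromEdgeSet (M' ∪ Mc i)).Reachable a z ↔ Gm.Reachable a z := by
    intro z
    constructor
    · intro hr
      rw [hG'un] at hr
      rcases reach_add hr with h1 | ⟨h1, h2⟩ | ⟨h1, h2⟩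
      · exact h1
      · exact absurd (h1.mono hmono) (huab u hu hua hub)
      · exact absurd (h1.mono hmono) (huab v hv hva hvb)
    · exact fun hr => hr.mono hGmle
  have hkeyB : ∀ z : V, (fromEdgeSet (M' ∪ Mc i)).Reachable b z ↔ Gm.Reachable b z := by
    intro z
    constructor
    · intro hr
      rw [hG'un] at hr
      rcases reach_add hr with h1 | ⟨h1, h2⟩ | ⟨h1, h2⟩
      · exact h1
      · exact absurd (hblocked.trans (h1.mono hmono)) (huab u hu hua hub)
      · exact absurd (hblocked.trans (h1.mono hmono)) (huab v hv hva hvb)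
    · exact fun hr => hr.mono hGmle
  -- non-reachability of a,b in new graph
  have hnr' : ¬(fromEdgeSet (M' ∪ Mc i)).Reachable a b := by
    intro hr
    exact hsep ((hkeyA b).mp hr)
  refine ⟨hred', hcard, ha', hb', hnr', ?_⟩
  -- now the path red counts
  set A : Set (Sym2 V) := {g ∈ M \ {f} | ∃ z ∈ g, Gm.Reachable a z} with hAdef
  set Bs : Set (Sym2 V) := {g ∈ M \ {f} | ∃ z ∈ g, Gm.Reachable b z} with hBdef
  set R : Set (Sym2 V) := {g ∈ M | ∃ z ∈ g, G.Reachable a z} with hRdef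
  have hstep1 : pathRedCount (Mc i) M a = R.ncard := by
    unfold pathRedCount
    rw [Set.union_comm]
  have hstep2a : pathRedCount (Mc i) M' a = A.ncard := by
    unfold pathRedCount
    rw [Set.union_comm]
    congr 1
    ext g
    constructor
    · rintro ⟨hgM', z, hzg, hr⟩
      have hr' : Gm.Reachable a z := (hkeyA z).mp hr
      rcases hgM' with rfl | hgMf
      · exfalso
        rcases Sym2.mem_iff.mp hzg with rfl | rfl
        · exact huab z hu hua hub (hr'.mono hmono)
        · exact huab z hv hva hvb (hr'.mono hmono)
      · exact ⟨hgMf, z, hzg, hr'⟩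
    · rintro ⟨hgMf, z, hzg, hr⟩
      exact ⟨Set.mem_insert_of_mem _ hgMf, z, hzg, (hkeyA z).mpr hr⟩
  have hstep2b : pathRedCount (Mc i) M' b = Bs.ncard := by
    unfold pathRedCount
    rw [Set.union_comm]
    congr 1
    ext g
    constructor
    · rintro ⟨hgM', z, hzg, hr⟩
      have hr' : Gm.Reachable b z := (hkeyB z).mp hr
      rcases hgM' with rfl | hgMf
      · exfalso
        rcases Sym2.mem_iff.mp hzg with rfl | rfl
        · exact huab z hu hua hub (hblocked.trans (hr'.mono hmono))
        · exact huab z hv hva hvb (hblocked.trans (hr'.mono hmono))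
      · exact ⟨hgMf, z, hzg, hr'⟩
    · rintro ⟨hgMf, z, hzg, hr⟩
      exact ⟨Set.mem_insert_of_mem _ hgMf, z, hzg, (hkeyB z).mpr hr⟩
  have hdisjAB : Disjoint A Bs := by
    rw [Set.disjoint_left]
    rintro g ⟨⟨hgM, hgf⟩, z1, hz1, hr1⟩ ⟨-, z2, hz2, hr2⟩
    induction g with
    | _ p q =>
      have hpq : p ≠ q := fun h => hM.1 _ hgM (Sym2.mk_isDiag_iff.mpr h)
      have hadj : Gm.Adj p q := (fromEdgeSet_adj _).mpr ⟨Or.inl ⟨hgM, hgf⟩, hpq⟩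
      have hr12 : Gm.Reachable z1 z2 := by
        rcases Sym2.mem_iff.mp hz1 with rfl | rfl <;> rcases Sym2.mem_iff.mp hz2 with rfl | rfl
        · exact Reachable.refl _
        · exact hadj.reachable
        · exact hadj.symm.reachable
        · exact Reachable.refl _
      exact hsep (hr1.trans (hr12.trans hr2.symm))
  have hswap : s(y,x) = f := Sym2.eq_swap
  have hay : G.Reachable a y :=
    hax.trans ((fromEdgeSet_adj _).mpr ⟨Or.inl hf, hxyne⟩).reachable
  have hsplity := split_one hM hMi hdisj hac ha hb hab hblocked (hswap ▸ hf : s(y,x) ∈ M) hay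
  rw [show ({s(y,x)} : Set (Sym2 V)) = {f} by rw [hswap]] at hsplity
  have hGmeq : fromEdgeSet ((M ∪ Mc i) \ {f}) = Gm := by
    rw [union_diff_edge (hdisj _ hf)]
  have hstep4 : A ∪ Bs = R \ {f} := by
    ext g
    constructor
    · rintro (⟨⟨hgM, hgf⟩, z, hzg, hr⟩ | ⟨⟨hgM, hgf⟩, z, hzg, hr⟩)
      · exact ⟨⟨hgM, z, hzg, hr.mono hmono⟩, hgf⟩
      · exact ⟨⟨hgM, z, hzg, hblocked.trans (hr.mono hmono)⟩, hgf⟩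
    · rintro ⟨⟨hgM, z, hzg, hr⟩, hgf⟩
      have hdel := reach_del x y hr
      rw [hGmeq] at hdel
      rcases hdel with h1 | ⟨h1, h2⟩ | ⟨h1, h2⟩
      · exact Or.inl ⟨⟨hgM, hgf⟩, z, hzg, h1⟩
      · rcases hsplity with ⟨hy1, -⟩ | ⟨hy1, -⟩
        · exact Or.inl ⟨⟨hgM, hgf⟩, z, hzg, hy1.symm.trans h2⟩
        · exact Or.inr ⟨⟨hgM, hgf⟩, z, hzg, hy1.symm.trans h2⟩
      · rcases hsplit with ⟨hx1, -⟩ | ⟨hx1, -⟩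
        · exact Or.inl ⟨⟨hgM, hgf⟩, z, hzg, hx1.symm.trans h2⟩
        · exact Or.inr ⟨⟨hgM, hgf⟩, z, hzg, hx1.symm.trans h2⟩
  have hfR : f ∈ R := ⟨hf, x, Sym2.mem_mk_left _ _, hax⟩
  rw [hstep1, hstep2a, hstep2b,
    ← Set.ncard_union_eq hdisjAB (Set.toFinite _) (Set.toFinite _), hstep4,
    Set.ncard_diff_singleton_add_one hfR (Set.toFinite _)]

lemma reverse_determined (hconf : IsConfig Mc)
    {T0 : Set (Sym2 V)} (hT0 : IsMatchingE T0)
    {wa wb : V}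
    (ha0 : a ∉ covered T0)
    (hnr0 : ¬(fromEdgeSet (T0 ∪ Mc i)).Reachable a b)
    (hSa : {z | (fromEdgeSet (T0 ∪ Mc i)).Reachable a z ∧ z ∉ covered T0} = {a, wa})
    (hSb : {z | (fromEdgeSet (T0 ∪ Mc i)).Reachable b z ∧ z ∉ covered T0} = {b, wb})
    {f : Sym2 V} (hfT0 : f ∉ T0) (hM1 : IsMatchingE (insert f T0))
    (ha1 : a ∉ covered (insert f T0)) (hb1 : b ∉ covered (insert f T0))
    (hreach1 : (fromEdgeSet (insert f T0 ∪ Mc i)).Reachable a b) :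
    f = s(wa, wb) := by
  induction f with
  | _ x y =>
    have hxunc : x ∉ covered T0 := by
      rintro ⟨e, heT0, hxe⟩
      exact hM1.2 s(x,y) (Set.mem_insert _ _) e (Set.mem_insert_of_mem _ heT0)
        (fun hh => hfT0 (hh ▸ heT0)) x (Sym2.mem_mk_left _ _) hxe
    have hyunc : y ∉ covered T0 := by
      rintro ⟨e, heT0, hye⟩
      exact hM1.2 s(x,y) (Set.mem_insert _ _) e (Set.mem_insert_of_mem _ heT0)
        (fun hh => hfT0 (hh ▸ heT0)) y (Sym2.mem_mk_right _ _) hye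
    have hxa : x ≠ a := fun h => ha1 ⟨s(x,y), Set.mem_insert _ _, h ▸ Sym2.mem_mk_left _ _⟩
    have hxb : x ≠ b := fun h => hb1 ⟨s(x,y), Set.mem_insert _ _, h ▸ Sym2.mem_mk_left _ _⟩
    have hya : y ≠ a := fun h => ha1 ⟨s(x,y), Set.mem_insert _ _, h ▸ Sym2.mem_mk_right _ _⟩
    have hyb : y ≠ b := fun h => hb1 ⟨s(x,y), Set.mem_insert _ _, h ▸ Sym2.mem_mk_right _ _⟩
    rw [Set.insert_union] at hreach1
    rcases reach_add hreach1 with h1 | ⟨h1, h2⟩ | ⟨h1, h2⟩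
    · exact absurd h1 hnr0
    · have hxwa : x = wa := by
        have : x ∈ ({a, wa} : Set V) := hSa ▸ ⟨h1, hxunc⟩
        rcases this with rfl | rfl
        · exact absurd rfl hxa
        · rfl
      have hywb : y = wb := by
        have : y ∈ ({b, wb} : Set V) := hSb ▸ ⟨h2.symm, hyunc⟩
        rcases this with rfl | rfl
        · exact absurd rfl hyb
        · rfl
      rw [hxwa, hywb]
    · have hxwb : x = wb := by
        have : x ∈ ({b, wb} : Set V) := hSb ▸ ⟨h2.symm, hxunc⟩
        rcases this with rfl | rfl
        · exact absurd rfl hxb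
        · rfl
      have hywa : y = wa := by
        have : y ∈ ({a, wa} : Set V) := hSa ▸ ⟨h1, hyunc⟩
        rcases this with rfl | rfl
        · exact absurd rfl hya
        · rfl
      rw [hxwb, hywa, Sym2.eq_swap]

end Switch



section Count
variable [Fintype V] {M : Set (Sym2 V)}

lemma covered_empty : covered (∅ : Set (Sym2 V)) = ∅ := by
  ext v; simp [covered]

lemma covered_insert (e : Sym2 V) (M : Set (Sym2 V)) :
    covered (insert e M) = {z | z ∈ e} ∪ covered M := by
  ext v
  constructor
  · rintro ⟨g, (rfl | hg), hvg⟩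
    · exact Or.inl hvg
    · exact Or.inr ⟨g, hg, hvg⟩
  · rintro (hv | ⟨g, hg, hvg⟩)
    · exact ⟨e, Set.mem_insert _ _, hv⟩
    · exact ⟨g, Set.mem_insert_of_mem _ hg, hvg⟩

lemma covered_ncard (hM : IsMatchingE M) : (covered M).ncard = 2 * M.ncard := by
  refine Set.Finite.induction_on
    (motive := fun s _ => IsMatchingE s → (covered s).ncard = 2 * s.ncard)
    M (Set.toFinite M) (fun _ => by simp [covered_empty]) ?_ hM
  clear hM
  intro e s he hsfin ih hM
  have hMs : IsMatchingE s := hM.mono (Set.subset_insert _ _)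
  have hdisj : Disjoint {z | z ∈ e} (covered s) := by
    rw [Set.disjoint_left]
    rintro z hz ⟨g, hgs, hzg⟩
    exact hM.2 e (Set.mem_insert _ _) g (Set.mem_insert_of_mem _ hgs)
      (fun h => he (h ▸ hgs)) z hz hzg
  have hever : ({z | z ∈ e} : Set V).ncard = 2 := by
    induction e with
    | _ x y =>
      have hxy : x ≠ y := fun h =>
        hM.1 _ (Set.mem_insert _ _) (Sym2.mk_isDiag_iff.mpr h)
      have : ({z | z ∈ s(x,y)} : Set V) = {x, y} := by
        ext z; simp [Sym2.mem_iff]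
      rw [this, Set.ncard_pair hxy]
  rw [covered_insert, Set.ncard_union_eq hdisj (Set.toFinite _) (Set.toFinite _),
    hever, ih hMs, Set.ncard_insert_of_notMem he (Set.toFinite _)]
  ring

lemma uncovered_ncard (hM : IsMatchingE M) :
    ((covered M)ᶜ : Set V).ncard = Fintype.card V - 2 * M.ncard := by
  rw [← covered_ncard hM]
  rw [Set.ncard_eq_toFinset_card', Set.ncard_eq_toFinset_card', Set.toFinset_compl,
    Finset.card_compl]

end Count


section Helpers
variable {M M' : Set (Sym2 V)} {f p : Sym2 V} {u : V}

lemma sym2_exists (e : Sym2 V) : ∃ x y : V, e = s(x,y) := by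
  induction e with
  | _ x y => exact ⟨x, y, rfl⟩

lemma pair_of_ncard_two {S : Set V} (h2 : S.ncard = 2) (hu : u ∈ S) :
    ∃ w, w ≠ u ∧ S = {u, w} := by
  obtain ⟨c, d, hcd, rfl⟩ := Set.ncard_eq_two.mp h2
  rcases hu with rfl | rfl
  · exact ⟨d, fun h => hcd h.symm, rfl⟩
  · exact ⟨c, hcd, Set.pair_comm _ _⟩

lemma insert_diff_eq₁ (hp : p ∉ M) : insert p (M \ {f}) \ M = {p} := by
  ext g
  constructor
  · rintro ⟨rfl | ⟨hgM, -⟩, hgnM⟩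
    · rfl
    · exact absurd hgM hgnM
  · rintro rfl
    exact ⟨Set.mem_insert _ _, hp⟩

lemma insert_diff_eq₂ (hf : f ∈ M) (hp : p ∉ M) : M \ insert p (M \ {f}) = {f} := by
  ext g
  constructor
  · rintro ⟨hgM, hgn⟩
    simp only [Set.mem_insert_iff, Set.mem_diff, Set.mem_singleton_iff, not_or, not_and,
      not_not] at hgn
    exact hgn.2 hgM
  · rintro rfl
    refine ⟨hf, ?_⟩
    rintro (rfl | ⟨-, hff⟩)
    · exact hp hf
    · exact hff rfl

lemma eq_insert_of_diffs (h1 : M \ M' = {f}) (h2 : M' \ M = {p}) :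
    M = insert f (M' \ {p}) := by
  have hfM : f ∈ M ∧ f ∉ M' := by
    have : f ∈ M \ M' := h1 ▸ rfl
    exact ⟨this.1, this.2⟩
  have hpM : p ∈ M' ∧ p ∉ M := by
    have : p ∈ M' \ M := h2 ▸ rfl
    exact ⟨this.1, this.2⟩
  ext g
  constructor
  · intro hg
    by_cases hg' : g ∈ M'
    · refine Set.mem_insert_of_mem _ ⟨hg', fun h => ?_⟩
      rw [Set.mem_singleton_iff] at h
      exact hpM.2 (h ▸ hg)
    · have : g ∈ M \ M' := ⟨hg, hg'⟩
      rw [h1] at this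
      exact Or.inl this
  · rintro (rfl | ⟨hgM', hgp⟩)
    · exact hfM.1
    · by_contra hgM
      have : g ∈ M' \ M := ⟨hgM', hgM⟩
      rw [h2] at this
      exact hgp this

end Helpers

/-- For `k ≥ 2` there are `c > 0` and `D₀ = D₀(k)` such that for every
`D ≥ D₀` there is `n₀` such that for all even `n ≥ n₀`: for any `k`-configuration of order `n`,
available edge `ab`, colour `i` and integer `ℓ ≥ 1`, one has
`ℓ·c·D²·|B_ℓ^i| ≤ n·|N_{ℓ-1}^i|`, where `B_ℓ^i` consists of the red matchings of size
`n/2 - D` covering neither `a` nor `b` in which `ab` is `i`-blocked with `ℓ` red edges on the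
blocking path, and `N_{ℓ-1}^i` consists of those in which `ab` is not `i`-blocked and the
alternating paths at `a` and at `b` together carry `ℓ - 1` red edges. -/
theorem blocked_switching (k : ℕ) (hk : 2 ≤ k) :
    ∃ (c : ℝ) (D₀ : ℕ), 0 < c ∧ ∀ D : ℕ, D₀ ≤ D → ∃ n₀ : ℕ,
      ∀ (V : Type) [Fintype V],
        Even (Fintype.card V) → n₀ ≤ Fintype.card V →
        ∀ Mc : Fin k → Set (Sym2 V), IsConfig Mc →
        ∀ a b : V, a ≠ b → Available Mc s(a, b) →
        ∀ i : Fin k, ∀ ℓ : ℕ, 1 ≤ ℓ →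
          (ℓ : ℝ) * c * (D : ℝ) ^ 2 *
              ({M : Set (Sym2 V) | IsRedMatching Mc M ∧ M.ncard = Fintype.card V / 2 - D ∧
                  a ∉ covered M ∧ b ∉ covered M ∧ s(a, b) ∈ reducedColour (Mc i) M ∧
                  pathRedCount (Mc i) M a = ℓ}.ncard : ℝ) ≤
            (Fintype.card V : ℝ) *
              ({M : Set (Sym2 V) | IsRedMatching Mc M ∧ M.ncard = Fintype.card V / 2 - D ∧
                  a ∉ covered M ∧ b ∉ covered M ∧ s(a, b) ∉ reducedColour (Mc i) M ∧
                  pathRedCount (Mc i) M a + pathRedCount (Mc i) M b = ℓ - 1}.ncard : ℝ) := by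
  refine ⟨1, 4 * k + 12, one_pos, fun D hD => ⟨4 * D + 4, ?_⟩⟩
  intro V _ hEven hn Mc hconf a b hab heavail i ℓ hℓ
  classical
  set n := Fintype.card V with hndef
  set B := {M : Set (Sym2 V) | IsRedMatching Mc M ∧ M.ncard = n / 2 - D ∧
      a ∉ covered M ∧ b ∉ covered M ∧ s(a, b) ∈ reducedColour (Mc i) M ∧
      pathRedCount (Mc i) M a = ℓ} with hBdef
  set N := {M : Set (Sym2 V) | IsRedMatching Mc M ∧ M.ncard = n / 2 - D ∧
      a ∉ covered M ∧ b ∉ covered M ∧ s(a, b) ∉ reducedColour (Mc i) M ∧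
      pathRedCount (Mc i) M a + pathRedCount (Mc i) M b = ℓ - 1} with hNdef
  have hkey : ℓ * (D * D) * B.ncard ≤ n * N.ncard := by
    set Bf := (Set.toFinite B).toFinset with hBf
    set Nf := (Set.toFinite N).toFinset with hNf
    set Rel : Set (Sym2 V) → Set (Sym2 V) → Prop :=
      fun M M' => (M \ M').ncard = 1 ∧ (M' \ M).ncard = 1 with hRel
    have hforward : ∀ M ∈ Bf, ℓ * (D * D) ≤ (Nf.filter (fun M' => Rel M M')).card := by
      intro M hM
      rw [Set.Finite.mem_toFinset] at hM
      obtain ⟨hredM, hcardM, haM, hbM, hblockedM, hcountM⟩ := hM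
      have hM0 : IsMatchingE M := hredM.1
      have hreach : (fromEdgeSet (M ∪ Mc i)).Reachable a b := by
        obtain ⟨u', v', heq', -, -, -, hr⟩ := hblockedM
        rw [Set.union_comm] at hr
        rcases Sym2.eq_iff.mp heq' with ⟨rfl, rfl⟩ | ⟨rfl, rfl⟩
        · exact hr
        · exact hr.symm
      -- the uncovered set
      have hm2 : 2 * M.ncard = n - 2 * D := by
        rw [hcardM]
        obtain ⟨t, ht⟩ := hEven
        omega
      have hUcard : ((covered M)ᶜ : Set V).ncard = 2 * D := by
        rw [uncovered_ncard hM0, hm2, ← hndef]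
        omega
      have habsub : ({a, b} : Set V) ⊆ (covered M)ᶜ := by
        rintro z (rfl | rfl) <;> assumption
      have hUc2 : (((covered M)ᶜ \ {a, b} : Set V)).ncard = 2 * D - 2 := by
        rw [Set.ncard_diff habsub (Set.toFinite _), hUcard, Set.ncard_pair hab]
      set Uf := (Set.toFinite ((covered M)ᶜ \ {a, b} : Set V)).toFinset with hUfdef
      have hUfcard : Uf.card = 2 * D - 2 := by
        rw [hUfdef, ← Set.ncard_eq_toFinset_card]
        exact hUc2
      have hUfmem : ∀ u, u ∈ Uf ↔ (u ∉ covered M ∧ u ≠ a ∧ u ≠ b) := by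
        intro u
        rw [hUfdef, Set.Finite.mem_toFinset, Set.mem_diff, Set.mem_compl_iff]
        simp only [Set.mem_insert_iff, Set.mem_singleton_iff, not_or]
      set badp : V → V → Prop := fun u v => v = u ∨ ∃ j : Fin k,
        s(u,v) ∈ Mc j ∨ (v ≠ u ∧ (fromEdgeSet (M ∪ Mc j)).Reachable u v) with hbadp
      have hbadcard : ∀ u ∈ Uf, (Uf.filter (fun v => badp u v)).card ≤ 2 * k + 1 := by
        intro u hu
        have huU := (hUfmem u).mp hu
        have hsub : Uf.filter (fun v => badp u v) ⊆ insert u (Finset.univ.biUnion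
            (fun j : Fin k => (Uf.filter (fun v => s(u,v) ∈ Mc j)) ∪
              (Uf.filter (fun v => v ≠ u ∧ (fromEdgeSet (M ∪ Mc j)).Reachable u v)))) := by
          intro v hv
          rw [Finset.mem_filter] at hv
          obtain ⟨hvU, hbad⟩ := hv
          rcases hbad with rfl | ⟨j, hj⟩
          · exact Finset.mem_insert_self _ _
          · refine Finset.mem_insert_of_mem (Finset.mem_biUnion.mpr ⟨j, Finset.mem_univ _, ?_⟩)
            rcases hj with h | h
            · exact Finset.mem_union_left _ (Finset.mem_filter.mpr ⟨hvU, h⟩)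
            · exact Finset.mem_union_right _ (Finset.mem_filter.mpr ⟨hvU, h⟩)
        have hperj : ∀ j : Fin k, ((Uf.filter (fun v => s(u,v) ∈ Mc j)) ∪
            (Uf.filter (fun v => v ≠ u ∧ (fromEdgeSet (M ∪ Mc j)).Reachable u v))).card ≤ 2 := by
          intro j
          have hc1 : (Uf.filter (fun v => s(u,v) ∈ Mc j)).card ≤ 1 := by
            rw [Finset.card_le_one]
            intro v1 h1 v2 h2
            rw [Finset.mem_filter] at h1 h2
            exact (matching_partner_unique (hconf j).1 h1.2 h2.2 :)
          have hc2 : (Uf.filter (fun v => v ≠ u ∧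
              (fromEdgeSet (M ∪ Mc j)).Reachable u v)).card ≤ 1 := by
            have hdisjj : ∀ e ∈ M, e ∉ Mc j := fun e he => (hredM.2.1 e he).2 j
            obtain ⟨w, -, hSj⟩ := pair_of_ncard_two
              (twoleaf hM0 (hconf j) hdisjj (hredM.2.2 j) u)
              (⟨Reachable.refl _, huU.1⟩ : u ∈ {z | (fromEdgeSet (M ∪ Mc j)).Reachable u z ∧
                z ∉ covered M})
            rw [Finset.card_le_one]
            intro v1 h1 v2 h2
            rw [Finset.mem_filter] at h1 h2
            have hv1 : v1 ∈ ({u, w} : Set V) := hSj ▸ ⟨h1.2.2, ((hUfmem v1).mp h1.1).1⟩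
            have hv2 : v2 ∈ ({u, w} : Set V) := hSj ▸ ⟨h2.2.2, ((hUfmem v2).mp h2.1).1⟩
            rcases hv1 with rfl | rfl
            · exact absurd rfl h1.2.1
            · rcases hv2 with rfl | rfl
              · exact absurd rfl h2.2.1
              · rfl
          calc ((Uf.filter _) ∪ (Uf.filter _)).card
              ≤ (Uf.filter (fun v => s(u,v) ∈ Mc j)).card +
                (Uf.filter (fun v => v ≠ u ∧
                  (fromEdgeSet (M ∪ Mc j)).Reachable u v)).card := Finset.card_union_le _ _
            _ ≤ 2 := by omega
        calc (Uf.filter (fun v => badp u v)).card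
            ≤ (insert u (Finset.univ.biUnion (fun j : Fin k =>
                (Uf.filter (fun v => s(u,v) ∈ Mc j)) ∪
                (Uf.filter (fun v => v ≠ u ∧
                  (fromEdgeSet (M ∪ Mc j)).Reachable u v))))).card :=
              Finset.card_le_card hsub
          _ ≤ (Finset.univ.biUnion (fun j : Fin k =>
                (Uf.filter (fun v => s(u,v) ∈ Mc j)) ∪
                (Uf.filter (fun v => v ≠ u ∧
                  (fromEdgeSet (M ∪ Mc j)).Reachable u v)))).card + 1 :=
              Finset.card_insert_le _ _
          _ ≤ (∑ j : Fin k, 2) + 1 := by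
              have := Finset.card_biUnion_le (s := (Finset.univ : Finset (Fin k)))
                (t := fun j : Fin k => (Uf.filter (fun v => s(u,v) ∈ Mc j)) ∪
                  (Uf.filter (fun v => v ≠ u ∧ (fromEdgeSet (M ∪ Mc j)).Reachable u v)))
              have h2 := Finset.sum_le_sum (fun j (_ : j ∈ Finset.univ) => hperj j)
              omega
          _ = 2 * k + 1 := by
              rw [Finset.sum_const, Finset.card_univ, Fintype.card_fin, smul_eq_mul]
              ring
      -- good pairs
      set GPf := (Uf ×ˢ Uf).filter (fun q => ¬ badp q.1 q.2) with hGPdef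
      have hGPcard : (2 * D - 2) * (2 * D - (2 * k + 3)) ≤ GPf.card := by
        have hsum : GPf.card = ∑ u ∈ Uf, (Uf.filter (fun v => ¬ badp u v)).card := by
          rw [hGPdef, Finset.card_filter, Finset.sum_product]
          exact Finset.sum_congr rfl (fun u _ => (Finset.card_filter _ _).symm)
        rw [hsum]
        calc (2 * D - 2) * (2 * D - (2 * k + 3))
            = ∑ _u ∈ Uf, (2 * D - (2 * k + 3)) := by
              rw [Finset.sum_const, smul_eq_mul, hUfcard]
          _ ≤ ∑ u ∈ Uf, (Uf.filter (fun v => ¬ badp u v)).card := by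
              apply Finset.sum_le_sum
              intro u hu
              have hpn := Finset.card_filter_add_card_filter_not
                (s := Uf) (p := fun v => badp u v)
              have := hbadcard u hu
              omega
      set Pf := GPf.image (fun q => s(q.1, q.2)) with hPfdef
      have hPf2 : GPf.card ≤ 2 * Pf.card := by
        apply Finset.card_le_mul_card_image
        intro e he
        obtain ⟨x0, y0, rfl⟩ := sym2_exists e
        have hsub : GPf.filter (fun q => s(q.1, q.2) = s(x0, y0)) ⊆ {(x0, y0), (y0, x0)} := by
          intro q hq
          rw [Finset.mem_filter] at hq
          rcases Sym2.eq_iff.mp hq.2 with ⟨h1, h2⟩ | ⟨h1, h2⟩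
          · exact Finset.mem_insert.mpr (Or.inl (Prod.ext h1 h2))
          · refine Finset.mem_insert.mpr (Or.inr ?_)
            rw [Finset.mem_singleton]
            exact Prod.ext h1 h2
        calc (GPf.filter (fun q => s(q.1, q.2) = s(x0, y0))).card
            ≤ ({(x0, y0), (y0, x0)} : Finset (V × V)).card := Finset.card_le_card hsub
          _ ≤ 2 := Finset.card_insert_le _ _ |>.trans (by simp)
      -- arithmetic ⇒ Pf.card ≥ D * D
      have hPfD : D * D ≤ Pf.card := by
        have harith : 2 * (D * D) ≤ (2 * D - 2) * (2 * D - (2 * k + 3)) := by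
          obtain ⟨E, hE⟩ : ∃ E, D = 4 * k + 12 + E := ⟨D - (4 * k + 12), by omega⟩
          have h1 : 2 * D - 2 = 8 * k + 22 + 2 * E := by omega
          have h2 : 2 * D - (2 * k + 3) = 6 * k + 21 + 2 * E := by omega
          rw [h1, h2, hE]
          nlinarith [Nat.zero_le (k * k), Nat.zero_le (E * k), Nat.zero_le (E * E)]
        omega
      -- the blocked-path edges
      set Rset : Set (Sym2 V) :=
        {g ∈ M | ∃ z ∈ g, (fromEdgeSet (Mc i ∪ M)).Reachable a z} with hRsetdef
      have hRℓ : Rset.ncard = ℓ := hcountM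
      set Rf := (Set.toFinite Rset).toFinset with hRfdef
      have hRfcard : Rf.card = ℓ := by
        rw [hRfdef, ← Set.ncard_eq_toFinset_card]
        exact hRℓ
      -- per pair membership
      have hmain : ∀ f ∈ Rf, ∀ p ∈ Pf, (insert p (M \ {f})) ∈ N ∧
          (insert p (M \ {f})) \ M = {p} ∧ M \ (insert p (M \ {f})) = {f} := by
        intro f hf p hp
        rw [hRfdef, Set.Finite.mem_toFinset] at hf
        obtain ⟨hfM, z, hzf, hrz⟩ := hf
        rw [Set.union_comm] at hrz
        obtain ⟨x, y, rfl⟩ := sym2_exists f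
        have hxyne : x ≠ y := fun h => hM0.1 _ hfM (Sym2.mk_isDiag_iff.mpr h)
        have hadjxy : (fromEdgeSet (M ∪ Mc i)).Adj x y :=
          (fromEdgeSet_adj _).mpr ⟨Or.inl hfM, hxyne⟩
        have hax : (fromEdgeSet (M ∪ Mc i)).Reachable a x := by
          rcases Sym2.mem_iff.mp hzf with rfl | rfl
          · exact hrz
          · exact hrz.trans hadjxy.symm.reachable
        rw [hPfdef, Finset.mem_image] at hp
        obtain ⟨q, hq, rfl⟩ := hp
        rw [hGPdef, Finset.mem_filter, Finset.mem_product] at hq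
        obtain ⟨⟨hq1, hq2⟩, hqgood⟩ := hq
        obtain ⟨hu, hua, hub⟩ := (hUfmem q.1).mp hq1
        obtain ⟨hv, hva, hvb⟩ := (hUfmem q.2).mp hq2
        have hvu : q.2 ≠ q.1 := fun h => hqgood (Or.inl h)
        have havail_uv : Available Mc s(q.1, q.2) :=
          ⟨fun hdiag => hvu (Sym2.mk_isDiag_iff.mp hdiag).symm,
            fun j h => hqgood (Or.inr ⟨j, Or.inl h⟩)⟩
        have hnreach : ∀ j, ¬(fromEdgeSet (M ∪ Mc j)).Reachable q.1 q.2 :=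
          fun j hr => hqgood (Or.inr ⟨j, Or.inr ⟨hvu, hr⟩⟩)
        obtain ⟨hred', hcard', ha'', hb'', hnr'', hcnt''⟩ :=
          switch_all hconf hredM hab haM hbM hreach hfM hax hu hv
            (fun h => hvu h.symm) hua hub hva hvb havail_uv hnreach
        refine ⟨⟨hred', by rw [hcard', hcardM], ha'', hb'', ?_, ?_⟩,
          insert_diff_eq₁ (fun h => hu ⟨_, h, Sym2.mem_mk_left _ _⟩),
          insert_diff_eq₂ hfM (fun h => hu ⟨_, h, Sym2.mem_mk_left _ _⟩)⟩
        · rintro ⟨u', v', heq', hne', -, -, hr⟩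
          rw [Set.union_comm] at hr
          rcases Sym2.eq_iff.mp heq' with ⟨rfl, rfl⟩ | ⟨rfl, rfl⟩
          · exact hnr'' hr
          · exact hnr'' hr.symm
        · have := hcountM
          omega
      -- injection
      have hinj : (Rf ×ˢ Pf).card ≤ (Nf.filter (fun M' => Rel M M')).card := by
        apply Finset.card_le_card_of_injOn (fun q => insert q.2 (M \ {q.1}))
        · intro q hq
          rw [Finset.mem_coe, Finset.mem_product] at hq
          obtain ⟨hmem, hd1, hd2⟩ := hmain q.1 hq.1 q.2 hq.2
          rw [Finset.mem_coe, Finset.mem_filter, Set.Finite.mem_toFinset]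
          refine ⟨hmem, ?_, ?_⟩
          · rw [hd2, Set.ncard_singleton]
          · rw [hd1, Set.ncard_singleton]
        · intro q hq q' hq' heq
          rw [Finset.mem_coe, Finset.mem_product] at hq hq'
          obtain ⟨-, hd1, hd2⟩ := hmain q.1 hq.1 q.2 hq.2
          obtain ⟨-, hd1', hd2'⟩ := hmain q'.1 hq'.1 q'.2 hq'.2
          dsimp only at heq
          rw [heq] at hd1 hd2
          exact Prod.ext (Set.singleton_eq_singleton_iff.mp (hd2.symm.trans hd2'))
            (Set.singleton_eq_singleton_iff.mp (hd1.symm.trans hd1'))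
      calc ℓ * (D * D) ≤ Rf.card * Pf.card := by
            rw [hRfcard]
            exact Nat.mul_le_mul_left ℓ hPfD
        _ = (Rf ×ˢ Pf).card := (Finset.card_product _ _).symm
        _ ≤ (Nf.filter (fun M' => Rel M M')).card := hinj
    have hbackward : ∀ M' ∈ Nf, (Bf.filter (fun M => Rel M M')).card ≤ n := by
      intro M' hM'
      rw [Set.Finite.mem_toFinset] at hM'
      obtain ⟨hredM', hcardM', ha', hb', hnota, -⟩ := hM'
      have hnr' : ¬(fromEdgeSet (M' ∪ Mc i)).Reachable a b := by
        intro hr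
        exact hnota ⟨a, b, rfl, hab, ha', hb', by rwa [Set.union_comm]⟩
      have hle : (Bf.filter (fun M => Rel M M')).card ≤ ((Set.toFinite M').toFinset).card := by
        apply Finset.card_le_card_of_injOn
          (fun M => if h : ∃ q, M' \ M = {q} then h.choose else s(a,a))
        · intro M hM
          rw [Finset.mem_coe, Finset.mem_filter] at hM
          obtain ⟨q, hq⟩ := Set.ncard_eq_one.mp hM.2.2
          dsimp only
          rw [dif_pos ⟨q, hq⟩, Finset.mem_coe, Set.Finite.mem_toFinset]
          have hspec : M' \ M = {(⟨q, hq⟩ : ∃ q, M' \ M = {q}).choose} :=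
            (⟨q, hq⟩ : ∃ q, M' \ M = {q}).choose_spec
          have hcq : (⟨q, hq⟩ : ∃ q, M' \ M = {q}).choose = q :=
            Set.singleton_eq_singleton_iff.mp (hspec.symm.trans hq)
          rw [hcq]
          have : q ∈ M' \ M := by rw [hq]; exact rfl
          exact this.1
        · intro M1 hM1 M2 hM2 heq
          simp only [Finset.coe_filter, Set.mem_setOf_eq] at hM1 hM2
          obtain ⟨hM1B, hrel11, hrel12⟩ := hM1
          obtain ⟨hM2B, hrel21, hrel22⟩ := hM2
          rw [Set.Finite.mem_toFinset] at hM1B hM2B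
          obtain ⟨f1, hf1⟩ := Set.ncard_eq_one.mp hrel11
          obtain ⟨p1, hp1⟩ := Set.ncard_eq_one.mp hrel12
          obtain ⟨f2, hf2⟩ := Set.ncard_eq_one.mp hrel21
          obtain ⟨p2, hp2⟩ := Set.ncard_eq_one.mp hrel22
          have himg1 : (if h : ∃ q, M' \ M1 = {q} then h.choose else s(a,a)) = p1 := by
            rw [dif_pos ⟨p1, hp1⟩]
            have hspec : M' \ M1 = {(⟨p1, hp1⟩ : ∃ q, M' \ M1 = {q}).choose} :=
              (⟨p1, hp1⟩ : ∃ q, M' \ M1 = {q}).choose_spec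
            have := hspec.symm.trans hp1
            exact Set.singleton_eq_singleton_iff.mp this
          have himg2 : (if h : ∃ q, M' \ M2 = {q} then h.choose else s(a,a)) = p2 := by
            rw [dif_pos ⟨p2, hp2⟩]
            have hspec : M' \ M2 = {(⟨p2, hp2⟩ : ∃ q, M' \ M2 = {q}).choose} :=
              (⟨p2, hp2⟩ : ∃ q, M' \ M2 = {q}).choose_spec
            have := hspec.symm.trans hp2
            exact Set.singleton_eq_singleton_iff.mp this
          dsimp only at heq
          rw [himg1, himg2] at heq
          subst heq
          -- now reconstruct
          have hMeq1 : M1 = insert f1 (M' \ {p1}) := eq_insert_of_diffs hf1 hp1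
          have hMeq2 : M2 = insert f2 (M' \ {p1}) := eq_insert_of_diffs hf2 hp2
          -- common data
          have hT0 : IsMatchingE (M' \ {p1}) := hredM'.1.mono Set.diff_subset
          have hdisj0 : ∀ e ∈ M' \ {p1}, e ∉ Mc i := fun e he => (hredM'.2.1 e he.1).2 i
          have hac0 : (fromEdgeSet ((M' \ {p1}) ∪ Mc i)).IsAcyclic :=
            acyclic_anti (fromEdgeSet_mono (Set.union_subset_union_left _ Set.diff_subset))
              (hredM'.2.2 i)
          have ha0 : a ∉ covered (M' \ {p1}) := fun h => ha' (covered_mono Set.diff_subset h)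
          have hb0 : b ∉ covered (M' \ {p1}) := fun h => hb' (covered_mono Set.diff_subset h)
          have hnr0 : ¬(fromEdgeSet ((M' \ {p1}) ∪ Mc i)).Reachable a b := fun h =>
            hnr' (h.mono (fromEdgeSet_mono (Set.union_subset_union_left _ Set.diff_subset)))
          obtain ⟨wa, -, hSa⟩ := pair_of_ncard_two
            (twoleaf hT0 (hconf i) hdisj0 hac0 a) (⟨Reachable.refl _, ha0⟩ :
              a ∈ {z | (fromEdgeSet ((M' \ {p1}) ∪ Mc i)).Reachable a z ∧
                z ∉ covered (M' \ {p1})})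
          obtain ⟨wb, -, hSb⟩ := pair_of_ncard_two
            (twoleaf hT0 (hconf i) hdisj0 hac0 b) (⟨Reachable.refl _, hb0⟩ :
              b ∈ {z | (fromEdgeSet ((M' \ {p1}) ∪ Mc i)).Reachable b z ∧
                z ∉ covered (M' \ {p1})})
          have hdet : ∀ (M0 : Set (Sym2 V)) (f0 : Sym2 V), M0 ∈ B →
              M0 = insert f0 (M' \ {p1}) → M0 \ M' = {f0} → f0 = s(wa, wb) := by
            intro M0 f0 hM0B hM0eq hf0
            obtain ⟨hredM0, -, haM0, hbM0, hblocked0, -⟩ := hM0B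
            have hf0M' : f0 ∉ M' := by
              have : f0 ∈ M0 \ M' := hf0 ▸ rfl
              exact this.2
            have hreach0 : (fromEdgeSet (M0 ∪ Mc i)).Reachable a b := by
              obtain ⟨u', v', heq', hne', -, -, hr⟩ := hblocked0
              rw [Set.union_comm] at hr
              rcases Sym2.eq_iff.mp heq' with ⟨rfl, rfl⟩ | ⟨rfl, rfl⟩
              · exact hr
              · exact hr.symm
            refine reverse_determined hconf hT0 ha0 hnr0 hSa hSb
              (fun h => hf0M' h.1) (hM0eq ▸ hredM0.1) (hM0eq ▸ haM0) (hM0eq ▸ hbM0) ?_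
            rw [← hM0eq]
            exact hreach0
          have he1 : f1 = s(wa, wb) := hdet M1 f1 hM1B hMeq1 hf1
          have he2 : f2 = s(wa, wb) := hdet M2 f2 hM2B hMeq2 hf2
          rw [hMeq1, hMeq2, he1, he2]
      calc (Bf.filter (fun M => Rel M M')).card ≤ ((Set.toFinite M').toFinset).card := hle
        _ = M'.ncard := (Set.ncard_eq_toFinset_card M' (Set.toFinite M')).symm
        _ ≤ n := by
            rw [hcardM']
            omega
    have hT1 : ((Bf ×ˢ Nf).filter (fun q => Rel q.1 q.2)).card
        = ∑ M ∈ Bf, (Nf.filter (fun M' => Rel M M')).card := by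
      rw [Finset.card_filter, Finset.sum_product]
      exact Finset.sum_congr rfl (fun M _ => (Finset.card_filter _ _).symm)
    have hT2 : ((Bf ×ˢ Nf).filter (fun q => Rel q.1 q.2)).card
        = ∑ M' ∈ Nf, (Bf.filter (fun M => Rel M M')).card := by
      rw [Finset.card_filter, Finset.sum_product_right]
      exact Finset.sum_congr rfl (fun M' _ => (Finset.card_filter _ _).symm)
    have hBcard : B.ncard = Bf.card := Set.ncard_eq_toFinset_card B (Set.toFinite B)
    have hNcard : N.ncard = Nf.card := Set.ncard_eq_toFinset_card N (Set.toFinite N)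
    calc ℓ * (D * D) * B.ncard = ∑ _M ∈ Bf, ℓ * (D * D) := by
          rw [Finset.sum_const, smul_eq_mul, hBcard]; ring
      _ ≤ ∑ M ∈ Bf, (Nf.filter (fun M' => Rel M M')).card := Finset.sum_le_sum hforward
      _ = ∑ M' ∈ Nf, (Bf.filter (fun M => Rel M M')).card := by rw [← hT1, hT2]
      _ ≤ ∑ _M' ∈ Nf, n := Finset.sum_le_sum hbackward
      _ = n * N.ncard := by rw [Finset.sum_const, smul_eq_mul, hNcard]; ring
  have hcast : ((ℓ * (D * D) * B.ncard : ℕ) : ℝ) ≤ ((n * N.ncard : ℕ) : ℝ) :=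
    Nat.cast_le.mpr hkey
  push_cast at hcast
  calc (ℓ : ℝ) * 1 * (D : ℝ) ^ 2 * (B.ncard : ℝ)
      = (ℓ : ℝ) * ((D : ℝ) * (D : ℝ)) * (B.ncard : ℝ) := by ring
    _ ≤ (n : ℝ) * (N.ncard : ℝ) := by linarith


end Kotzig
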